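/- Proposition 1 (extraneous edges only, no missing edges): Let G be a DAG over V ∪ R where every node in R is a leaf with no children. Suppose X, Y ∈ V, Z ⊆ V \ {X, Y}, and let R_K ⊆ R. If X and Y are d-separated by Z ∪ R_K in G, then X and Y are d-separated by Z in G. -/

import Mathlib

/-- A directed graph (edge relation) is acyclic. -/
def IsAcyclic {α : Type*} (G : α → α → Prop) : Prop :=
  ∀ v, ¬ Relation.TransGen G v v

/-- A leaf node: no outgoing edges. -/
def IsLeaf {α : Type*} (G : α → α → Prop) (v : α) : Prop :=
  ∀ w, ¬ G v w

/-- An undirected path from `x` to `y`: a list of at least two distinct vertices,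
starting at `x`, ending at `y`, consecutive vertices adjacent (in either direction). -/
def IsUPath {α : Type*} (G : α → α → Prop) (x y : α) (p : List α) : Prop :=
  2 ≤ p.length ∧ p.head? = some x ∧ p.getLast? = some y ∧ p.Nodup ∧
    p.Chain' (fun a b => G a b ∨ G b a)

/-- The vertex at (interior) position `i` of `p` is a collider:
both adjacent path edges point into it. -/
def ColliderAt {α : Type*} (G : α → α → Prop) (p : List α) (i : ℕ) : Prop :=
  ∃ a b c, p[i-1]? = some a ∧ p[i]? = some b ∧ p[i+1]? = some c ∧ G a b ∧ G c b

/-- A path is active given conditioning set `S`: every interior collider is in `S`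
or has a descendant in `S`, and every interior non-collider is not in `S`. -/
def ActivePath {α : Type*} (G : α → α → Prop) (S : Set α) (x y : α) (p : List α) : Prop :=
  IsUPath G x y p ∧
    ∀ i, 0 < i → i + 1 < p.length →
      ∀ b, p[i]? = some b →
        (ColliderAt G p i → b ∈ S ∨ ∃ d ∈ S, Relation.ReflTransGen G b d) ∧
        (¬ ColliderAt G p i → b ∉ S)

/-- d-separation: no active undirected path between `x` and `y` given `S`. -/
def DSep {α : Type*} (G : α → α → Prop) (x y : α) (S : Set α) : Prop :=
  ∀ p : List α, ¬ ActivePath G S x y p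

/-! A leaf in the interior of a path is necessarily a collider. On a path active given `Z`, such a
vertex therefore lies in `Z` or has a descendant in `Z`; a leaf is its own only descendant, so it
lies in `Z ⊆ V` and hence not in `R`. Thus no interior vertex lies in `R_K`, and additionally
conditioning on `R_K` leaves the path active. -/

section

variable {α : Type*} {G : α → α → Prop}

theorem IsLeaf.eq_of_reflTransGen {b d : α} (hb : IsLeaf G b) (hbd : Relation.ReflTransGen G b d) :
    d = b := by
  rcases hbd.cases_head with rfl | ⟨c, hbc, -⟩
  · rfl
  · exact absurd hbc (hb c)

theorem colliderAt_of_isLeaf {p : List α} (hp : p.IsChain (fun a b => G a b ∨ G b a))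
    {i : ℕ} (hi : 0 < i) (hi₁ : i + 1 < p.length) {b : α} (hb : p[i]? = some b)
    (hleaf : IsLeaf G b) : ColliderAt G p i := by
  have hpi : p[i] = b := (List.getElem?_eq_some_iff.mp hb).2
  have hin : G p[i - 1] b ∨ G b p[i - 1] := by
    simpa only [Nat.sub_add_cancel hi, hpi] using
      List.isChain_iff_getElem.mp hp (i - 1) (by omega)
  have hout : G b p[i + 1] ∨ G p[i + 1] b := by
    simpa only [hpi] using List.isChain_iff_getElem.mp hp i hi₁
  refine ⟨p[i - 1], b, p[i + 1], by simp, hb, by simp [hi₁], ?_, ?_⟩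
  · exact hin.resolve_right (hleaf _)
  · exact hout.resolve_left (hleaf _)

theorem ActivePath.notMem_of_isLeaf {S R : Set α} {x y : α} {p : List α}
    (hp : ActivePath G S x y p) (hSR : Disjoint S R) (hleaf : ∀ r ∈ R, IsLeaf G r)
    {i : ℕ} (hi : 0 < i) (hi₁ : i + 1 < p.length) {b : α} (hb : p[i]? = some b) : b ∉ R := by
  intro hbR
  have hcol := colliderAt_of_isLeaf hp.1.2.2.2.2 hi hi₁ hb (hleaf b hbR)
  obtain hbS | ⟨d, hdS, hbd⟩ := (hp.2 i hi hi₁ b hb).1 hcol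
  · exact hSR.notMem_of_mem_left hbS hbR
  · rw [(hleaf b hbR).eq_of_reflTransGen hbd] at hdS
    exact hSR.notMem_of_mem_left hdS hbR

theorem ActivePath.union_of_interior_notMem {S T : Set α} {x y : α} {p : List α}
    (hp : ActivePath G S x y p)
    (hT : ∀ i, 0 < i → i + 1 < p.length → ∀ b, p[i]? = some b → b ∉ T) :
    ActivePath G (S ∪ T) x y p := by
  refine ⟨hp.1, fun i hi hi₁ b hb => ⟨fun hcol => ?_, fun hcol hbST => ?_⟩⟩
  · obtain hbS | ⟨d, hdS, hbd⟩ := (hp.2 i hi hi₁ b hb).1 hcol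
    · exact .inl (.inl hbS)
    · exact .inr ⟨d, .inl hdS, hbd⟩
  · obtain hbS | hbT := hbST
    · exact (hp.2 i hi hi₁ b hb).2 hcol hbS
    · exact hT i hi hi₁ b hb hbT

end

theorem dsep_of_dsep_union_indicators_general {α : Type*} (G : α → α → Prop)
    (V R : Set α) (hVR : Disjoint V R)
    (hleaf : ∀ r ∈ R, IsLeaf G r)
    (X Y : α)
    (Z : Set α) (hZ : Z ⊆ V \ {X, Y})
    (RK : Set α) (hRK : RK ⊆ R)
    (h : DSep G X Y (Z ∪ RK)) : DSep G X Y Z := by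
  intro p hp
  have hZR : Disjoint Z R := hVR.mono_left (hZ.trans Set.sdiff_subset)
  exact h p <| hp.union_of_interior_notMem fun i hi hi₁ b hb hbRK =>
    hp.notMem_of_isLeaf hZR hleaf hi hi₁ hb (hRK hbRK)

/-- Proposition 1: in a DAG over `V ∪ R` where every node of `R` is a
leaf, for `X, Y ∈ V`, `Z ⊆ V \ {X, Y}` and `R_K ⊆ R`, d-separation of `X` and `Y`
by `Z ∪ R_K` implies d-separation by `Z`. -/
theorem dsep_of_dsep_union_indicators {α : Type*} (G : α → α → Prop)
    (hG : IsAcyclic G) (V R : Set α) (hVR : Disjoint V R)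
    (hleaf : ∀ r ∈ R, IsLeaf G r)
    (X Y : α) (hX : X ∈ V) (hY : Y ∈ V) (hXY : X ≠ Y)
    (Z : Set α) (hZ : Z ⊆ V \ {X, Y})
    (RK : Set α) (hRK : RK ⊆ R)
    (h : DSep G X Y (Z ∪ RK)) : DSep G X Y Z :=
  dsep_of_dsep_union_indicators_general G V R hVR hleaf X Y Z hZ RK hRK h
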